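/- Let k ≥ 3, let G be a connected finite simple graph with at least one edge, let H = G^{(k)} be the k-th power hypergraph of G, and fix a vertex v₀ of H. Then the number of vectors x ∈ (ℤ/kℤ)^{V(H)} satisfying ∑_{v∈e} x_v = 0 in ℤ/kℤ for every edge e of H (i.e., B_H x = 0 over ℤ/kℤ) and x_{v₀} = 0 is exactly k^{|V(G)|+|E(G)|(k−3)−1}. -/

import Mathlib

open Finset

/-- The vertex type of the `k`-th power hypergraph `G^{(k)}`: the vertices of `G`
together with `k-2` new vertices for each edge of `G`. -/
abbrev PowerVert (k N : ℕ) (G : SimpleGraph (Fin N)) [DecidableRel G.Adj] : Type :=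
  Fin N ⊕ ({ε : Sym2 (Fin N) // ε ∈ G.edgeFinset} × Fin (k - 2))

/-- The edge of `G^{(k)}` corresponding to an edge `ε = {u,v}` of `G`:
`{u, v, w_{ε,1}, …, w_{ε,k-2}}`. -/
def powerEdge (k N : ℕ) (G : SimpleGraph (Fin N)) [DecidableRel G.Adj]
    (ε : {ε : Sym2 (Fin N) // ε ∈ G.edgeFinset}) : Finset (PowerVert k N G) :=
  ((univ.filter (fun u : Fin N => u ∈ ε.1)).image Sum.inl) ∪
    ((univ : Finset (Fin (k - 2))).image (fun t => Sum.inr (ε, t)))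

/-!
Each edge of `G^{(k)}` contains a new vertex of its own, so the edge-sum map
`(ℤ/kℤ)^{V(H)} → (ℤ/kℤ)^{E(G)}` is onto and its kernel has `k^{|V(H)| - |E(G)|}` elements.
Every edge has exactly `k` vertices, so the constant vectors lie in that kernel; hence evaluation
at `v₀` maps the kernel onto `ℤ/kℤ`, and the condition `x_{v₀} = 0` divides the count by `k`.
-/

theorem AddMonoidHom.card_ker_mul_card_of_surjective {A B : Type*} [AddGroup A] [AddGroup B]
    (f : A →+ B) (hf : Function.Surjective f) : Nat.card f.ker * Nat.card B = Nat.card A := by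
  rw [← AddSubgroup.card_top (G := B), ← f.range_eq_top.mpr hf, ← AddSubgroup.index_ker,
    AddSubgroup.card_mul_index]

section PowerHypergraph

variable {k N : ℕ} {G : SimpleGraph (Fin N)} [DecidableRel G.Adj]

theorem PowerVert.pos (v : PowerVert k N G) : 0 < N := by
  rcases v with u | ⟨ε, _⟩
  · exact u.pos
  · exact Sym2.ind (f := fun _ => 0 < N) (fun a _ => a.pos) ε.1

theorem card_powerVert_fun :
    Nat.card (PowerVert k N G → ZMod k) = k ^ (N + #G.edgeFinset * (k - 2)) := by
  simp only [Nat.card_fun, Nat.card_zmod, Nat.card_sum, Nat.card_prod, Nat.card_eq_finsetCard,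
    Nat.card_fin]

theorem sum_powerEdge {M : Type*} [AddCommMonoid M] (ε : {ε : Sym2 (Fin N) // ε ∈ G.edgeFinset})
    (x : PowerVert k N G → M) :
    ∑ v ∈ powerEdge k N G ε, x v =
      ∑ u ∈ ε.1.toFinset, x (.inl u) + ∑ t : Fin (k - 2), x (.inr (ε, t)) := by
  have hendpoints : univ.filter (· ∈ ε.1) = ε.1.toFinset := by ext; simp
  rw [powerEdge, sum_union, sum_image, sum_image, hendpoints]
  · intro a _ b _ h; simpa using h
  · intro a _ b _ h; exact Sum.inl.inj h
  · simp [disjoint_left]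

theorem card_powerEdge (hk : 2 ≤ k) (ε : {ε : Sym2 (Fin N) // ε ∈ G.edgeFinset}) :
    #(powerEdge k N G ε) = k := by
  have hε : ¬ ε.1.IsDiag := G.not_isDiag_of_mem_edgeSet (G.mem_edgeFinset.mp ε.2)
  rw [card_eq_sum_ones, sum_powerEdge, ← card_eq_sum_ones, Sym2.card_toFinset_of_not_isDiag _ hε]
  simp only [sum_const, card_univ, Fintype.card_fin, smul_eq_mul, mul_one]
  omega

variable (k N G) in
def edgeSumHom :
    (PowerVert k N G → ZMod k) →+ ({ε : Sym2 (Fin N) // ε ∈ G.edgeFinset} → ZMod k) where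
  toFun x ε := ∑ v ∈ powerEdge k N G ε, x v
  map_zero' := by ext; simp
  map_add' x y := by ext; simp [sum_add_distrib]

@[simp]
theorem mem_ker_edgeSumHom {x : PowerVert k N G → ZMod k} :
    x ∈ (edgeSumHom k N G).ker ↔ ∀ ε, ∑ v ∈ powerEdge k N G ε, x v = 0 := by
  simp [edgeSumHom, funext_iff]

theorem edgeSumHom_surjective (hk : 3 ≤ k) : Function.Surjective (edgeSumHom k N G) := by
  intro b
  let t₀ : Fin (k - 2) := ⟨0, by omega⟩
  refine ⟨Sum.elim 0 fun p => if p.2 = t₀ then b p.1 else 0, funext fun ε => ?_⟩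
  simp [edgeSumHom, sum_powerEdge]

theorem card_ker_edgeSumHom (hk : 3 ≤ k) :
    Nat.card (edgeSumHom k N G).ker = k ^ (N + #G.edgeFinset * (k - 3)) := by
  have h := (edgeSumHom k N G).card_ker_mul_card_of_surjective (edgeSumHom_surjective hk)
  rw [Nat.card_fun, Nat.card_zmod, Nat.card_eq_finsetCard, card_powerVert_fun,
    show k - 2 = k - 3 + 1 by omega, mul_add_one, ← add_assoc, pow_add] at h
  exact mul_right_cancel₀ (pow_ne_zero _ (by omega)) h

theorem const_mem_ker_edgeSumHom (hk : 2 ≤ k) (c : ZMod k) :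
    (fun _ => c) ∈ (edgeSumHom k N G).ker := by
  rw [mem_ker_edgeSumHom]
  intro ε
  rw [sum_const, card_powerEdge hk, nsmul_eq_mul, ZMod.natCast_self, zero_mul]

end PowerHypergraph

theorem stmt11_general (k N : ℕ) (hk : 3 ≤ k) (G : SimpleGraph (Fin N)) [DecidableRel G.Adj]
    (v₀ : PowerVert k N G) :
    Nat.card {x : PowerVert k N G → ZMod k //
      (∀ ε : {ε : Sym2 (Fin N) // ε ∈ G.edgeFinset},
        ∑ v ∈ powerEdge k N G ε, x v = 0) ∧ x v₀ = 0} =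
      k ^ (N + G.edgeFinset.card * (k - 3) - 1) := by
  let ψ : (edgeSumHom k N G).ker →+ ZMod k :=
    (Pi.evalAddMonoidHom _ v₀).comp (edgeSumHom k N G).ker.subtype
  have hψ : Function.Surjective ψ := fun c => ⟨⟨_, const_mem_ker_edgeSumHom (by omega) c⟩, rfl⟩
  have hsol : {x : PowerVert k N G → ZMod k //
      (∀ ε, ∑ v ∈ powerEdge k N G ε, x v = 0) ∧ x v₀ = 0} ≃ ψ.ker :=
    { toFun x := ⟨⟨x.1, mem_ker_edgeSumHom.mpr x.2.1⟩, x.2.2⟩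
      invFun y := ⟨y.1.1, mem_ker_edgeSumHom.mp y.1.2, y.2⟩ }
  have h := ψ.card_ker_mul_card_of_surjective hψ
  have hpos : 0 < N + #G.edgeFinset * (k - 3) := by have := v₀.pos; omega
  rw [Nat.card_zmod, card_ker_edgeSumHom hk, ← Nat.sub_one_add_one hpos.ne', pow_succ] at h
  rw [Nat.card_congr hsol]
  exact mul_right_cancel₀ (by omega) h

/-- for a connected simple graph `G` with at least one edge, `k ≥ 3`,
`H = G^{(k)}` and a fixed vertex `v₀` of `H`, the number of vectors
`x ∈ (ℤ/kℤ)^{V(H)}` with `∑_{v ∈ e} x_v = 0` for every edge `e` of `H` and `x_{v₀} = 0`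
is `k^{|V(G)| + |E(G)|(k-3) - 1}`. -/
theorem stmt11 (k N : ℕ) (hk : 3 ≤ k) (G : SimpleGraph (Fin N)) [DecidableRel G.Adj]
    (hconn : G.Connected) (hne : G.edgeFinset.Nonempty)
    (v₀ : PowerVert k N G) :
    Nat.card {x : PowerVert k N G → ZMod k //
      (∀ ε : {ε : Sym2 (Fin N) // ε ∈ G.edgeFinset},
        ∑ v ∈ powerEdge k N G ε, x v = 0) ∧ x v₀ = 0} =
      k ^ (N + G.edgeFinset.card * (k - 3) - 1) :=
  stmt11_general k N hk G v₀
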